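/- Given m_1, m_2 ∈ L^∞(T) and the operators S_i f(z) = m_i(z) f(z^N) on L^2(T), the operators S_1 and S_2 have orthogonal ranges (i.e., S_1* S_2 = 0) if and only if (1/N) Σ_{w^N = z} conj(m_1(w)) m_2(w) = 0 for almost all z ∈ T. -/

import Mathlib

open MeasureTheory ComplexConjugate

noncomputable instance : MeasurableSpace Circle := borel Circle
instance : BorelSpace Circle := ⟨rfl⟩

open scoped Real

/-!
With `K = conj m₁ * m₂` one has `⟪S₁ f, S₂ g⟫ = ∫ K z * conj (f (z ^ N)) * g (z ^ N)`. Rotations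
by `N`-th roots of unity preserve Haar measure and fix `z ^ N`, so `K` may be replaced by its
average `A (z ^ N)` over the fibre of `z ↦ z ^ N` through `z`. As `z ↦ z ^ N` also preserves Haar
measure, `⟪S₁ f, S₂ g⟫ = ∫ A w * conj (f w) * g w`: the operator `S₁* S₂` is multiplication by `A`,
which is zero iff `A = 0` a.e.
-/
namespace Circle

noncomputable def primitiveRoot (N : ℕ) : Circle := exp (2 * π / N)

theorem isPrimitiveRoot_primitiveRoot {N : ℕ} (hN : N ≠ 0) :
    IsPrimitiveRoot (primitiveRoot N : ℂ) N := by
  convert Complex.isPrimitiveRoot_exp N hN using 1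
  rw [primitiveRoot, coe_exp]
  push_cast
  ring_nf

theorem primitiveRoot_pow_self {N : ℕ} (hN : N ≠ 0) : primitiveRoot N ^ N = 1 :=
  coe_injective (isPrimitiveRoot_primitiveRoot hN).pow_eq_one

theorem pow_eq_pow_iff_exists_primitiveRoot {N : ℕ} (hN : N ≠ 0) {u w : Circle} :
    w ^ N = u ^ N ↔ ∃ j < N, primitiveRoot N ^ j * u = w := by
  constructor
  · intro h
    have : NeZero N := ⟨hN⟩
    have hroot : ((w / u : Circle) : ℂ) ^ N = 1 := by rw [← coe_pow, div_pow, h, div_self', coe_one]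
    obtain ⟨j, hj, hζj⟩ := (isPrimitiveRoot_primitiveRoot hN).eq_pow_of_pow_eq_one hroot
    exact ⟨j, hj, by rw [← coe_pow, coe_inj] at hζj; rw [hζj, div_mul_cancel]⟩
  · rintro ⟨j, -, rfl⟩
    rw [mul_pow, ← pow_mul, mul_comm j, pow_mul, primitiveRoot_pow_self hN, one_pow, one_mul]

theorem finsum_mem_pow_eq_pow {M : Type*} [AddCommMonoid M] {N : ℕ} (hN : N ≠ 0)
    (k : Circle → M) (u : Circle) :
    ∑ᶠ w ∈ {w : Circle | w ^ N = u ^ N}, k w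
      = ∑ j ∈ Finset.range N, k (primitiveRoot N ^ j * u) := by
  classical
  have hfiber : {w : Circle | w ^ N = u ^ N}
      = ((Finset.range N).image fun j => primitiveRoot N ^ j * u : Set Circle) := by
    ext w
    simp [pow_eq_pow_iff_exists_primitiveRoot hN]
  rw [hfiber, finsum_mem_coe_finset, Finset.sum_image]
  intro i hi j hj hij
  exact (isPrimitiveRoot_primitiveRoot hN).pow_inj (Finset.mem_range.1 hi)
    (Finset.mem_range.1 hj) (by rw [← coe_pow, ← coe_pow, mul_right_cancel hij])

noncomputable def fiberAverage (N : ℕ) (k : Circle → ℂ) (z : Circle) : ℂ :=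
  (N : ℂ)⁻¹ * ∑ᶠ w ∈ {w : Circle | w ^ N = z}, k w

theorem fiberAverage_pow {N : ℕ} (hN : N ≠ 0) (k : Circle → ℂ) (u : Circle) :
    fiberAverage N k (u ^ N) = (N : ℂ)⁻¹ * ∑ j ∈ Finset.range N, k (primitiveRoot N ^ j * u) := by
  rw [fiberAverage, finsum_mem_pow_eq_pow hN]

/-- A measurable section of `z ↦ z ^ N`: through it, null sets and measurability descend from
`f ∘ (· ^ N)` to `f`. -/
noncomputable def nthRoot (N : ℕ) (z : Circle) : Circle := exp (Complex.arg z / N)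

theorem measurable_nthRoot (N : ℕ) : Measurable (nthRoot N) :=
  have hcoe : Measurable fun z : Circle => (z : ℂ) := (by fun_prop : Continuous _).measurable
  exp.continuous.measurable.comp ((Complex.measurable_arg.comp hcoe).div_const _)

theorem nthRoot_pow {N : ℕ} (hN : N ≠ 0) (z : Circle) : nthRoot N z ^ N = z := by
  rw [nthRoot, ← exp_natCast_mul, mul_div_cancel₀ _ (Nat.cast_ne_zero.2 hN), exp_arg]

section

variable (μ : Measure Circle) [μ.IsHaarMeasure]

theorem measurePreserving_pow {N : ℕ} (hN : N ≠ 0) :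
    MeasurePreserving (fun z : Circle => z ^ N) μ μ :=
  (powMonoidHom N).measurePreserving (continuous_pow N)
    (fun z => ⟨nthRoot N z, nthRoot_pow hN z⟩) rfl

theorem quasiMeasurePreserving_nthRoot {N : ℕ} (hN : N ≠ 0) :
    Measure.QuasiMeasurePreserving (nthRoot N) μ μ := by
  refine ⟨measurable_nthRoot N, Measure.AbsolutelyContinuous.mk fun s hs hμs => ?_⟩
  have hpre : (fun u : Circle => u ^ N) ⁻¹' (nthRoot N ⁻¹' s)
      ⊆ ⋃ j ∈ Finset.range N, (primitiveRoot N ^ j * ·) ⁻¹' s := by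
    intro u hu
    obtain ⟨j, hj, hroot⟩ := (pow_eq_pow_iff_exists_primitiveRoot hN).1 (nthRoot_pow hN (u ^ N))
    exact Set.mem_biUnion (Finset.mem_range.2 hj) (by simpa [Set.mem_preimage, hroot] using hu)
  rw [Measure.map_apply (measurable_nthRoot N) hs,
    ← (measurePreserving_pow μ hN).measure_preimage (measurable_nthRoot N hs).nullMeasurableSet]
  refine measure_mono_null hpre ((measure_biUnion_null_iff (Finset.range N).countable_toSet).2
    fun j _ => ?_)
  rwa [measure_preimage_mul]

end

section

variable {μ : Measure Circle} [μ.IsHaarMeasure] {N : ℕ} {k : Circle → ℂ}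

theorem aestronglyMeasurable_fiberAverage (hN : N ≠ 0) (hk : AEStronglyMeasurable k μ) :
    AEStronglyMeasurable (fiberAverage N k) μ := by
  have hpow : AEStronglyMeasurable (fun u => fiberAverage N k (u ^ N)) μ := by
    simp_rw [fiberAverage_pow hN]
    exact (Finset.aestronglyMeasurable_fun_sum _ fun j _ =>
      hk.comp_measurePreserving (measurePreserving_mul_left μ _)).const_mul _
  convert hpow.comp_quasiMeasurePreserving (quasiMeasurePreserving_nthRoot μ hN) using 1
  ext z
  simp [nthRoot_pow hN]

theorem integrable_fiberAverage (hN : N ≠ 0) (hk : Integrable k μ) :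
    Integrable (fiberAverage N k) μ := by
  refine ((measurePreserving_pow μ hN).integrable_comp
    (aestronglyMeasurable_fiberAverage hN hk.1)).1 ?_
  simp_rw [Function.comp_def, fiberAverage_pow hN]
  exact (integrable_finsetSum _ fun j _ =>
    (measurePreserving_mul_left μ _).integrable_comp_of_integrable hk).const_mul _

theorem integral_mul_comp_pow (hN : N ≠ 0) (hk : MemLp k ⊤ μ) {g : Circle → ℂ}
    (hg : Integrable g μ) :
    ∫ z, k z * g (z ^ N) ∂μ = ∫ w, fiberAverage N k w * g w ∂μ := by
  have hpow := measurePreserving_pow μ hN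
  have hrot : ∀ j, ∫ z, k (primitiveRoot N ^ j * z) * g (z ^ N) ∂μ = ∫ z, k z * g (z ^ N) ∂μ :=
    fun j => by
      simpa [mul_pow, ← pow_mul, pow_mul', primitiveRoot_pow_self hN] using
        integral_mul_left_eq_self (fun z => k z * g (z ^ N)) (μ := μ) (primitiveRoot N ^ j)
  have hint : ∀ j, Integrable (fun z => k (primitiveRoot N ^ j * z) * g (z ^ N)) μ := fun j =>
    (hpow.integrable_comp_of_integrable hg).mul_of_top_right
      (hk.comp_measurePreserving (measurePreserving_mul_left μ _))
  calc ∫ z, k z * g (z ^ N) ∂μ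
      = (N : ℂ)⁻¹ * ∑ j ∈ Finset.range N, ∫ z, k (primitiveRoot N ^ j * z) * g (z ^ N) ∂μ := by
        simp [hrot, hN]
    _ = ∫ z, fiberAverage N k (z ^ N) * g (z ^ N) ∂μ := by
        rw [← integral_finsetSum _ fun j _ => hint j, ← integral_const_mul]
        refine integral_congr_ae (ae_of_all _ fun z => ?_)
        simp only [fiberAverage_pow hN, Finset.sum_mul, Finset.mul_sum, mul_assoc]
    _ = ∫ w, fiberAverage N k w * g w ∂μ := by
        have hmeas : AEStronglyMeasurable (fun w => fiberAverage N k w * g w)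
            (μ.map (· ^ N)) := by
          rw [hpow.map_eq]
          exact (aestronglyMeasurable_fiberAverage hN hk.1).mul hg.1
        rw [← integral_map hpow.aemeasurable hmeas, hpow.map_eq]

end

end Circle

theorem ContinuousLinearMap.adjoint_mul_eq_zero_iff {𝕜 E : Type*} [RCLike 𝕜]
    [NormedAddCommGroup E] [InnerProductSpace 𝕜 E] [CompleteSpace E] {A B : E →L[𝕜] E} :
    adjoint A * B = 0 ↔ ∀ x y, inner 𝕜 (A x) (B y) = 0 := by
  rw [ContinuousLinearMap.ext_iff, forall_comm]
  refine forall_congr' fun y => ?_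
  simp only [mul_apply_eq_comp, zero_apply, ← adjoint_inner_right]
  exact ⟨fun h x => by rw [h, inner_zero_right],
    fun h => ext_inner_left 𝕜 fun x => by rw [h, inner_zero_right]⟩

namespace MeasureTheory

variable {α : Type*} [MeasurableSpace α] {μ : Measure α}

theorem L2.inner_eq_integral_of_ae_eq_mul_comp {T : α → α} {m₁ m₂ : α → ℂ}
    {S₁ S₂ : Lp ℂ 2 μ →L[ℂ] Lp ℂ 2 μ}
    (hS₁ : ∀ f : Lp ℂ 2 μ, (S₁ f : α → ℂ) =ᵐ[μ] fun z => m₁ z * f (T z))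
    (hS₂ : ∀ f : Lp ℂ 2 μ, (S₂ f : α → ℂ) =ᵐ[μ] fun z => m₂ z * f (T z)) (f g : Lp ℂ 2 μ) :
    inner ℂ (S₁ f) (S₂ g) = ∫ z, conj (m₁ z) * m₂ z * (conj (f (T z)) * g (T z)) ∂μ := by
  rw [L2.inner_def]
  refine integral_congr_ae ?_
  filter_upwards [hS₁ f, hS₂ g] with z h₁ h₂
  rw [RCLike.inner_apply, h₁, h₂, map_mul]
  ring

theorem forall_integral_mul_conj_mul_eq_zero_iff {A : α → ℂ} (hA : Integrable A μ) :
    (∀ f g : Lp ℂ 2 μ, ∫ w, A w * (conj (f w) * g w) ∂μ = 0) ↔ A =ᵐ[μ] 0 := by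
  refine ⟨fun h => hA.ae_eq_zero_of_forall_setIntegral_eq_zero fun E hE hμE => ?_,
    fun hA₀ f g => integral_eq_zero_of_ae ?_⟩
  · set f := indicatorConstLp 2 hE hμE.ne (1 : ℂ)
    rw [← h f f, ← integral_indicator hE]
    refine integral_congr_ae ?_
    filter_upwards [indicatorConstLp_coeFn (p := 2) (hs := hE) (hμs := hμE.ne) (c := (1 : ℂ))]
      with w hw
    rw [hw]
    by_cases hwE : w ∈ E <;> simp [hwE]
  · filter_upwards [hA₀] with w hw
    simp [hw]

end MeasureTheory

theorem orthogonal_ranges_iff_general (N : ℕ) (hN : 2 ≤ N) (μ : Measure Circle) [μ.IsHaarMeasure]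
    (m₁ m₂ : Circle → ℂ) (hm₁ : MemLp m₁ ⊤ μ) (hm₂ : MemLp m₂ ⊤ μ)
    (S₁ S₂ : Lp ℂ 2 μ →L[ℂ] Lp ℂ 2 μ)
    (hS₁ : ∀ f : Lp ℂ 2 μ, (S₁ f : Circle → ℂ) =ᵐ[μ] fun z => m₁ z * f (z ^ N))
    (hS₂ : ∀ f : Lp ℂ 2 μ, (S₂ f : Circle → ℂ) =ᵐ[μ] fun z => m₂ z * f (z ^ N)) :
    ContinuousLinearMap.adjoint S₁ * S₂ = 0 ↔
      (fun z => (N : ℂ)⁻¹ * ∑ᶠ w ∈ {w : Circle | w ^ N = z}, conj (m₁ w) * m₂ w)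
        =ᵐ[μ] fun _ => (0 : ℂ) := by
  have hN₀ : N ≠ 0 := by omega
  have hK : MemLp (fun w => conj (m₁ w) * m₂ w) ⊤ μ := hm₂.mul' hm₁.star
  have hinner : ∀ f g : Lp ℂ 2 μ, inner ℂ (S₁ f) (S₂ g)
      = ∫ w, Circle.fiberAverage N (fun w => conj (m₁ w) * m₂ w) w * (conj (f w) * g w) ∂μ :=
    fun f g => by
      have hfg : Integrable (fun w => conj (f w) * g w) μ := by
        simpa only [RCLike.inner_apply, mul_comm] using L2.integrable_inner (𝕜 := ℂ) f g
      rw [L2.inner_eq_integral_of_ae_eq_mul_comp hS₁ hS₂,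
        Circle.integral_mul_comp_pow hN₀ hK (g := fun w => conj (f w) * g w) hfg]
  rw [ContinuousLinearMap.adjoint_mul_eq_zero_iff]
  simp_rw [hinner]
  exact forall_integral_mul_conj_mul_eq_zero_iff
    (Circle.integrable_fiberAverage hN₀ (hK.integrable le_top))

/-- $S_1, S_2$ have orthogonal ranges iff $\frac1N\sum_{w^N=z}\overline{m_1(w)}m_2(w)=0$ a.e. -/
theorem orthogonal_ranges_iff (N : ℕ) (hN : 2 ≤ N) (μ : Measure Circle) [μ.IsHaarMeasure]
    [IsProbabilityMeasure μ] (m₁ m₂ : Circle → ℂ) (hm₁ : MemLp m₁ ⊤ μ) (hm₂ : MemLp m₂ ⊤ μ)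
    (S₁ S₂ : Lp ℂ 2 μ →L[ℂ] Lp ℂ 2 μ)
    (hS₁ : ∀ f : Lp ℂ 2 μ, (S₁ f : Circle → ℂ) =ᵐ[μ] fun z => m₁ z * f (z ^ N))
    (hS₂ : ∀ f : Lp ℂ 2 μ, (S₂ f : Circle → ℂ) =ᵐ[μ] fun z => m₂ z * f (z ^ N)) :
    ContinuousLinearMap.adjoint S₁ * S₂ = 0 ↔
      (fun z => (N : ℂ)⁻¹ * ∑ᶠ w ∈ {w : Circle | w ^ N = z}, conj (m₁ w) * m₂ w)
        =ᵐ[μ] fun _ => (0 : ℂ) :=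
  orthogonal_ranges_iff_general N hN μ m₁ m₂ hm₁ hm₂ S₁ S₂ hS₁ hS₂
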